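/- Let (W,S) be a Coxeter system with S finite, let w be an element of the center Z(W), and let w = s_1⋯s_l be a reduced representation (s_i ∈ S, ℓ(w) = l). Then ℓ(w s_i) < ℓ(w) for every i = 1,…,l; consequently, letting T = {s_1,…,s_l}, the parabolic subgroup W_T is finite and w is the element of longest length in W_T. -/

import Mathlib

open List

namespace HosakaAux

open scoped Classical

variable {W : Type*} [Group W]

lemma conj_eq_iff (X v t : W) : X * t * X⁻¹ = v ↔ t = X⁻¹ * v * X := by
  constructor
  · intro h; rw [← h]; group
  · intro h; rw [h]; group

section flip

variable (a b : W) (ha : a * a = 1) (hb : b * b = 1)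

/-- The Bourbaki sign permutation associated to an involution. -/
noncomputable def flip : Equiv.Perm (W × ℤˣ) :=
  Function.Involutive.toPerm
    (fun x => (a * x.1 * a, if x.1 = a then -x.2 else x.2))
    (by
      have hcancel : ∀ u : W, a * (a * u * a) * a = u := by
        intro u
        calc a * (a * u * a) * a = a * (a * u) * a * a := by group
          _ = a * a * u * a * a := by group
          _ = u := by rw [ha]; rw [show 1 * u * a * a = u * (a * a) by group, ha, mul_one]
      rintro ⟨t, ε⟩
      by_cases h : t = a
      · simp only [h, if_pos rfl, hcancel]
        have : a * a * a = a := by rw [ha, one_mul]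
        rw [show a * a * a = a by rw [ha, one_mul]]
        simp
      · have h2 : a * t * a ≠ a := by
          intro hc
          apply h
          have := congrArg (fun z => a * z * a) hc
          rw [hcancel] at this
          rw [this, show a * a * a = a by rw [ha, one_mul]]
        simp [h, h2, hcancel])

lemma flip_apply (t : W) (ε : ℤˣ) :
    flip a ha (t, ε) = (a * t * a, if t = a then -ε else ε) := rfl

variable {a b}

lemma pow_semiconj (k : ℕ) : b * (a * b) ^ k = (b * a) ^ k * b := by
  have h : SemiconjBy b (a * b) (b * a) := by unfold SemiconjBy; group
  exact h.pow_right k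

lemma pow_inv_eq (hha : a⁻¹ = a) (hhb : b⁻¹ = b) (m : ℕ) : ((a * b) ^ m)⁻¹ = (b * a) ^ m := by
  rw [← inv_pow]
  congr 1
  rw [mul_inv_rev, hha, hhb]

include ha hb in
lemma flip_pow_apply (k : ℕ) (t : W) (ε : ℤˣ) :
    ((flip a ha * flip b hb) ^ k) (t, ε) =
      ((a * b) ^ k * t * ((a * b) ^ k)⁻¹,
        (∏ j ∈ Finset.range (2 * k),
          if t = b * (a * b) ^ j then (-1 : ℤˣ) else 1) * ε) := by
  have hha : a⁻¹ = a := inv_eq_of_mul_eq_one_right ha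
  have hhb : b⁻¹ = b := inv_eq_of_mul_eq_one_right hb
  have hinv : ∀ m : ℕ, ((a * b) ^ m)⁻¹ = (b * a) ^ m := pow_inv_eq hha hhb
  induction k with
  | zero => simp
  | succ k ih =>
    rw [pow_succ', Equiv.Perm.mul_apply, ih, Equiv.Perm.mul_apply, flip_apply, flip_apply]
    have e1 : ((a * b) ^ k)⁻¹ * b * (a * b) ^ k = b * (a * b) ^ (2 * k) := by
      calc ((a * b) ^ k)⁻¹ * b * (a * b) ^ k = (b * a) ^ k * b * (a * b) ^ k := by rw [hinv]
        _ = b * (a * b) ^ k * (a * b) ^ k := by rw [pow_semiconj]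
        _ = b * (a * b) ^ (2 * k) := by rw [mul_assoc, ← pow_add, two_mul]
    have e2 : ((a * b) ^ k)⁻¹ * (b * a * b) * (a * b) ^ k = b * (a * b) ^ (2 * k + 1) := by
      calc ((a * b) ^ k)⁻¹ * (b * a * b) * (a * b) ^ k
          = (b * a) ^ k * (b * a * b) * (a * b) ^ k := by rw [hinv]
        _ = ((b * a) ^ k * (b * a)) * (b * (a * b) ^ k) := by group
        _ = (b * a) ^ (k + 1) * (b * (a * b) ^ k) := by rw [← pow_succ]
        _ = (b * a) ^ (k + 1) * ((b * a) ^ k * b) := by rw [pow_semiconj]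
        _ = ((b * a) ^ (k + 1) * (b * a) ^ k) * b := by rw [mul_assoc]
        _ = (b * a) ^ (2 * k + 1) * b := by rw [← pow_add, show k + 1 + k = 2 * k + 1 by omega]
        _ = b * (a * b) ^ (2 * k + 1) := (pow_semiconj _).symm
    have c1 : ((a * b) ^ k * t * ((a * b) ^ k)⁻¹ = b) ↔ (t = b * (a * b) ^ (2 * k)) := by
      rw [conj_eq_iff, e1]
    have c2 : (b * ((a * b) ^ k * t * ((a * b) ^ k)⁻¹) * b = a) ↔
        (t = b * (a * b) ^ (2 * k + 1)) := by
      have step : (b * ((a * b) ^ k * t * ((a * b) ^ k)⁻¹) * b = a) ↔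
          ((a * b) ^ k * t * ((a * b) ^ k)⁻¹ = b * a * b) := by
        constructor
        · intro h
          have h' := congrArg (fun z => b * z * b) h
          calc (a * b) ^ k * t * ((a * b) ^ k)⁻¹
              = b * (b * ((a * b) ^ k * t * ((a * b) ^ k)⁻¹) * b) * b := by
                rw [show ∀ u : W, b * (b * u * b) * b = u from ?_]
                · intro u
                  calc b * (b * u * b) * b = b * b * u * (b * b) := by group
                    _ = u := by rw [hb]; group
            _ = b * a * b := by rw [h]
        · intro h
          rw [h]
          calc b * (b * a * b) * b = b * b * a * (b * b) := by group
            _ = a := by rw [hb]; group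
      rw [step, conj_eq_iff, e2]
    have comp1 : a * (b * ((a * b) ^ k * t * ((a * b) ^ k)⁻¹) * b) * a
        = (a * b) ^ (k + 1) * t * ((a * b) ^ (k + 1))⁻¹ := by
      rw [hinv, hinv]
      calc a * (b * ((a * b) ^ k * t * (b * a) ^ k) * b) * a
          = (a * b) * (a * b) ^ k * t * ((b * a) ^ k * (b * a)) := by group
        _ = (a * b) ^ (k + 1) * t * (b * a) ^ (k + 1) := by rw [← pow_succ', ← pow_succ]
    have hsplit : 2 * (k + 1) = 2 * k + 1 + 1 := by omega
    rw [hsplit, Finset.prod_range_succ, Finset.prod_range_succ]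
    rw [Prod.mk.injEq]
    constructor
    · exact comp1
    · simp only [c1, c2]
      by_cases h1 : t = b * (a * b) ^ (2 * k) <;>
        by_cases h2 : t = b * (a * b) ^ (2 * k + 1) <;>
        simp [h1, h2]

include ha hb in
lemma flip_pow_eq_one (m : ℕ) (hm : (a * b) ^ m = 1) :
    (flip a ha * flip b hb) ^ m = 1 := by
  apply Equiv.ext
  rintro ⟨t, ε⟩
  rw [flip_pow_apply ha hb]
  have hsign : (∏ j ∈ Finset.range (2 * m),
      if t = b * (a * b) ^ j then (-1 : ℤˣ) else 1) = 1 := by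
    rw [two_mul, Finset.prod_range_add, ← Finset.prod_mul_distrib]
    apply Finset.prod_eq_one
    intro j hj
    have : (a * b) ^ (m + j) = (a * b) ^ j := by rw [pow_add, hm, one_mul]
    rw [this]
    by_cases h : t = b * (a * b) ^ j <;> simp [h]
  rw [hm, hsign]
  simp

end flip

section cox

variable {B : Type*} {M : CoxeterMatrix B} (cs : CoxeterSystem M W)

lemma liftable : M.IsLiftable (fun i =>
    flip (cs.simple i) (cs.simple_mul_simple_self i)) := by
  intro i i'
  exact flip_pow_eq_one _ _ _ (cs.simple_mul_simple_pow i i')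

/-- The sign homomorphism. -/
noncomputable def phi : W →* Equiv.Perm (W × ℤˣ) :=
  cs.lift ⟨fun i => flip (cs.simple i) (cs.simple_mul_simple_self i), liftable cs⟩

lemma phi_simple (i : B) :
    phi cs (cs.simple i) = flip (cs.simple i) (cs.simple_mul_simple_self i) :=
  cs.lift_apply_simple (liftable cs) i

/-- The sign of `t` relative to a list of reflections. -/
noncomputable def sgn (t : W) (l : List W) : ℤˣ :=
  (l.map fun z => if t = z then (-1 : ℤˣ) else 1).prod

@[simp] lemma sgn_nil (t : W) : sgn t [] = 1 := rfl

lemma sgn_cons (t z : W) (l : List W) :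
    sgn t (z :: l) = (if t = z then (-1 : ℤˣ) else 1) * sgn t l := by
  simp [sgn]

lemma sgn_concat (t z : W) (l : List W) :
    sgn t (l.concat z) = sgn t l * (if t = z then (-1 : ℤˣ) else 1) := by
  simp [sgn]

lemma sgn_eq_one_of_not_mem (t : W) (l : List W) (h : t ∉ l) : sgn t l = 1 := by
  apply List.prod_eq_one
  intro x hx
  obtain ⟨z, hz, rfl⟩ := List.mem_map.mp hx
  rw [if_neg]
  intro hc
  exact h (hc ▸ hz)

lemma ris_cons (i : B) (ω : List B) :
    cs.rightInvSeq (i :: ω) =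
      ((cs.wordProd ω)⁻¹ * cs.simple i * cs.wordProd ω) :: cs.rightInvSeq ω := rfl

lemma phi_wordProd (ω : List B) (t : W) (ε : ℤˣ) :
    phi cs (cs.wordProd ω) (t, ε) =
      (cs.wordProd ω * t * (cs.wordProd ω)⁻¹, sgn t (cs.rightInvSeq ω) * ε) := by
  induction ω with
  | nil => simp [CoxeterSystem.wordProd_nil]
  | cons i ω ih =>
    rw [cs.wordProd_cons, map_mul, Equiv.Perm.mul_apply, ih, phi_simple, flip_apply]
    rw [ris_cons, sgn_cons, Prod.mk.injEq]
    constructor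
    · rw [mul_inv_rev, cs.inv_simple]
      group
    · rw [conj_eq_iff]
      by_cases h : t = (cs.wordProd ω)⁻¹ * cs.simple i * cs.wordProd ω <;> simp [h, mul_assoc]

lemma sgn_invariant {ω ω' : List B} (h : cs.wordProd ω = cs.wordProd ω') (t : W) :
    sgn t (cs.rightInvSeq ω) = sgn t (cs.rightInvSeq ω') := by
  have h1 := phi_wordProd cs ω t 1
  have h2 := phi_wordProd cs ω' t 1
  rw [h] at h1
  have := (Prod.mk.injEq _ _ _ _).mp (h1.symm.trans h2)
  simpa using this.2

/-- The (simple) right exchange condition. -/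
lemma exchange {ω : List B} (hred : cs.IsReduced ω) {i : B}
    (h : cs.length (cs.wordProd ω * cs.simple i) < cs.length (cs.wordProd ω)) :
    ∃ j < ω.length, cs.wordProd ω * cs.simple i = cs.wordProd (ω.eraseIdx j) := by
  obtain ⟨γ, hγlen, hγ⟩ := cs.exists_reduced_word (cs.wordProd ω * cs.simple i)
  have hprod : cs.wordProd (γ.concat i) = cs.wordProd ω := by
    rw [cs.wordProd_concat, ← hγ, cs.simple_mul_simple_cancel_right]
  have hmem : cs.simple i ∈ cs.rightInvSeq ω := by
    by_contra hni
    have hniγ : cs.simple i ∉ cs.rightInvSeq γ := by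
      intro hm
      obtain ⟨j, hj, hgj⟩ := List.getElem_of_mem hm
      have hj' : j < γ.length := by simpa using hj
      have hkey := cs.wordProd_mul_getD_rightInvSeq γ j
      rw [List.getD_eq_getElem _ 1 hj, hgj] at hkey
      have h1 : cs.length (cs.wordProd γ * cs.simple i) ≤ (γ.eraseIdx j).length :=
        hkey ▸ cs.length_wordProd_le (γ.eraseIdx j)
      have h2 : (γ.eraseIdx j).length + 1 = γ.length := List.length_eraseIdx_add_one hj'
      have h3 : cs.wordProd γ * cs.simple i = cs.wordProd ω := by
        rw [← hγ, cs.simple_mul_simple_cancel_right]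
      rw [h3] at h1
      have h4 : cs.length (cs.wordProd ω * cs.simple i) = γ.length := by rw [hγ]; exact hγlen
      omega
    have hinv := sgn_invariant cs hprod (cs.simple i)
    rw [sgn_eq_one_of_not_mem _ _ hni] at hinv
    rw [cs.rightInvSeq_concat, sgn_concat, if_pos rfl] at hinv
    have hmap : cs.simple i ∉ List.map (⇑(MulAut.conj (cs.simple i))) (cs.rightInvSeq γ) := by
      intro hm
      obtain ⟨z, hz, hze⟩ := List.mem_map.mp hm
      apply hniγ
      have : z = cs.simple i := by
        have := congrArg (fun u => (cs.simple i)⁻¹ * u * cs.simple i) hze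
        simpa [MulAut.conj_apply, mul_assoc] using this
      rwa [← this]
    rw [sgn_eq_one_of_not_mem _ _ hmap, one_mul] at hinv
    exact absurd hinv.symm (by decide)
  obtain ⟨j, hj, hgj⟩ := List.getElem_of_mem hmem
  have hj' : j < ω.length := by simpa using hj
  refine ⟨j, hj', ?_⟩
  have hkey := cs.wordProd_mul_getD_rightInvSeq ω j
  rwa [List.getD_eq_getElem _ 1 hj, hgj] at hkey

/-- Every word is equivalent to a reduced word using a subset of its letters. -/
lemma reduce : ∀ (n : ℕ) (γ : List B), γ.length ≤ n →
    ∃ γ' : List B, cs.IsReduced γ' ∧ cs.wordProd γ' = cs.wordProd γ ∧ ∀ j ∈ γ', j ∈ γ := by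
  intro n
  induction n with
  | zero =>
    intro γ hγ
    rw [Nat.le_zero, List.length_eq_zero_iff] at hγ
    subst hγ
    exact ⟨[], by simp [CoxeterSystem.IsReduced], rfl, by simp⟩
  | succ n ih =>
    intro γ hγ
    by_cases hr : cs.IsReduced γ
    · exact ⟨γ, hr, rfl, fun j hj => hj⟩
    rcases List.eq_nil_or_concat γ with rfl | ⟨δ, i, rfl⟩
    · exact absurd (by simp [CoxeterSystem.IsReduced]) hr
    have hlenγ : (δ.concat i).length = δ.length + 1 := by simp
    have hδn : δ.length ≤ n := by omega
    have hprodγ : cs.wordProd (δ.concat i) = cs.wordProd δ * cs.simple i :=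
      cs.wordProd_concat i δ
    by_cases hδ : cs.IsReduced δ
    · have hδeq : cs.length (cs.wordProd δ) = δ.length := hδ
      have hne : cs.length (cs.wordProd (δ.concat i)) ≠ (δ.concat i).length := hr
      have hlen : cs.length (cs.wordProd δ * cs.simple i) < cs.length (cs.wordProd δ) := by
        rcases cs.length_mul_simple (cs.wordProd δ) i with h | h
        · exfalso
          apply hne
          rw [hprodγ, h, hδeq, hlenγ]
        · have hpos : cs.length (cs.wordProd δ) ≠ 0 := by
            intro h0
            rw [cs.length_eq_zero_iff] at h0
            apply hne
            have hd0 : δ.length = 0 := by rw [← hδeq, h0, cs.length_one]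
            rw [hprodγ, h0, one_mul, cs.length_simple, hlenγ, hd0]
          omega
      obtain ⟨j, hj, hex⟩ := exchange cs hδ hlen
      obtain ⟨γ', h1, h2, h3⟩ := ih (δ.eraseIdx j)
        (by have := List.length_eraseIdx_add_one hj; omega)
      refine ⟨γ', h1, ?_, ?_⟩
      · rw [h2, ← hex, hprodγ]
      · intro x hx
        have : x ∈ δ := List.eraseIdx_subset (h3 x hx)
        rw [List.concat_eq_append]
        exact List.mem_append_left _ this
    · obtain ⟨δ', hδ'red, hδ'prod, hδ'mem⟩ := ih δ hδn
      have hlt : δ'.length < δ.length := by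
        have h1 : δ'.length = cs.length (cs.wordProd δ) := by
          rw [← hδ'prod]; exact hδ'red.symm
        have h2 : cs.length (cs.wordProd δ) ≤ δ.length := cs.length_wordProd_le δ
        have h3 : cs.length (cs.wordProd δ) ≠ δ.length := hδ
        omega
      obtain ⟨γ', h1, h2, h3⟩ := ih (δ'.concat i) (by simp; omega)
      refine ⟨γ', h1, ?_, ?_⟩
      · rw [h2, cs.wordProd_concat, hδ'prod, hprodγ]
      · intro x hx
        have hx' := h3 x hx
        rw [List.concat_eq_append, List.mem_append] at hx'
        rw [List.concat_eq_append, List.mem_append]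
        rcases hx' with hxδ | hxi
        · exact Or.inl (hδ'mem x hxδ)
        · exact Or.inr hxi

lemma exists_word_of_mem_closure (S : Set B) (v : W)
    (hv : v ∈ Subgroup.closure (cs.simple '' S)) :
    ∃ γ : List B, (∀ j ∈ γ, j ∈ S) ∧ v = cs.wordProd γ := by
  refine Subgroup.closure_induction ?_ ?_ ?_ ?_ hv
  · rintro x ⟨i, hi, rfl⟩
    exact ⟨[i], by simpa using hi, (cs.wordProd_singleton i).symm⟩
  · exact ⟨[], by simp, (cs.wordProd_nil).symm⟩
  · rintro x y _ _ ⟨γ₁, m1, rfl⟩ ⟨γ₂, m2, rfl⟩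
    refine ⟨γ₁ ++ γ₂, ?_, (cs.wordProd_append γ₁ γ₂).symm⟩
    intro j hj
    rcases List.mem_append.mp hj with h | h
    · exact m1 j h
    · exact m2 j h
  · rintro x _ ⟨γ, m, rfl⟩
    refine ⟨γ.reverse, ?_, (cs.wordProd_reverse γ).symm⟩
    intro j hj
    exact m j (List.mem_reverse.mp hj)

/-- A reduced word for an element of the standard parabolic. -/
lemma exists_reduced_word_of_mem_closure (S : Set B) (v : W)
    (hv : v ∈ Subgroup.closure (cs.simple '' S)) :
    ∃ γ : List B, cs.IsReduced γ ∧ (∀ j ∈ γ, j ∈ S) ∧ v = cs.wordProd γ := by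
  obtain ⟨γ₀, hm, hp⟩ := exists_word_of_mem_closure cs S v hv
  obtain ⟨γ, h1, h2, h3⟩ := reduce cs γ₀.length γ₀ le_rfl
  exact ⟨γ, h1, fun j hj => hm j (h3 j hj), by rw [hp, h2]⟩

/-- The key length-additivity lemma: if every letter of `γ` is a right descent
of `w` and `γ` is reduced, then `ℓ(w ⬝ π γ) + |γ| = ℓ(w)`. -/
lemma length_mul_wordProd_add (w : W) :
    ∀ γ : List B, cs.IsReduced γ →
      (∀ j ∈ γ, cs.length (w * cs.simple j) < cs.length w) →
      cs.length (w * cs.wordProd γ) + γ.length = cs.length w := by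
  intro γ
  induction γ with
  | nil => simp
  | cons i γ' ih =>
    intro hred hd
    have hred' : cs.IsReduced γ' := by
      have := CoxeterSystem.IsReduced.drop hred 1
      simpa using this
    have hIH := ih hred' (fun j hj => hd j (List.mem_cons_of_mem _ hj))
    have hu := cs.exists_reduced_word (w * cs.wordProd γ')
    obtain ⟨α, hαlen, hα⟩ := hu
    have hαlen' : cs.length (w * cs.wordProd γ') = α.length := by rw [hα]; exact hαlen
    have hw_eq : cs.wordProd (α ++ γ'.reverse) = w := by
      rw [cs.wordProd_append, ← hα, cs.wordProd_reverse]
      group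
    have hredαβ : cs.IsReduced (α ++ γ'.reverse) := by
      show cs.length (cs.wordProd (α ++ γ'.reverse)) = (α ++ γ'.reverse).length
      rw [hw_eq, List.length_append, List.length_reverse, ← hαlen']
      omega
    have hd_i : cs.length (w * cs.simple i) < cs.length w := hd i (List.mem_cons_self)
    have hexh : cs.length (cs.wordProd (α ++ γ'.reverse) * cs.simple i)
        < cs.length (cs.wordProd (α ++ γ'.reverse)) := by rw [hw_eq]; exact hd_i
    obtain ⟨j, hj, hex⟩ := exchange cs hredαβ hexh
    rw [hw_eq] at hex
    have hγlen : cs.length (cs.wordProd (i :: γ')) = γ'.length + 1 := by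
      rw [hred]; simp
    have hlow : cs.length w ≤ cs.length (w * cs.wordProd (i :: γ')) + (γ'.length + 1) := by
      have h1 : cs.length (w * cs.wordProd (i :: γ') * (cs.wordProd (i :: γ'))⁻¹)
          ≤ cs.length (w * cs.wordProd (i :: γ')) + cs.length ((cs.wordProd (i :: γ'))⁻¹) :=
        cs.length_mul_le _ _
      rw [mul_assoc, mul_inv_cancel, mul_one, cs.length_inv, hγlen] at h1
      exact h1
    by_cases hcase : j < α.length
    · have herase : (α ++ γ'.reverse).eraseIdx j = α.eraseIdx j ++ γ'.reverse :=
        List.eraseIdx_append_of_lt_length hcase _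
      rw [herase, cs.wordProd_append, cs.wordProd_reverse] at hex
      have hkey : w * cs.wordProd (i :: γ') = cs.wordProd (α.eraseIdx j) := by
        rw [cs.wordProd_cons, ← mul_assoc, hex]
        group
      have hup : cs.length (w * cs.wordProd (i :: γ')) ≤ (α.eraseIdx j).length := by
        rw [hkey]; exact cs.length_wordProd_le _
      have hel : (α.eraseIdx j).length + 1 = α.length := List.length_eraseIdx_add_one hcase
      simp only [List.length_cons]
      omega
    · push_neg at hcase
      exfalso
      have hjlt : j - α.length < γ'.reverse.length := by
        rw [List.length_append] at hj
        omega
      have herase : (α ++ γ'.reverse).eraseIdx j = α ++ γ'.reverse.eraseIdx (j - α.length) :=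
        List.eraseIdx_append_of_length_le hcase _
      rw [herase, cs.wordProd_append, ← hα] at hex
      have hd_eq : cs.wordProd (γ'.reverse.eraseIdx (j - α.length))
          = (cs.wordProd γ')⁻¹ * cs.simple i := by
        have h' := hex
        rw [mul_assoc] at h'
        have h'' := mul_left_cancel h'
        exact eq_inv_mul_iff_mul_eq.mpr h''.symm
      have hup : cs.length ((cs.wordProd γ')⁻¹ * cs.simple i)
          ≤ γ'.length - 1 := by
        rw [← hd_eq]
        have h1 := cs.length_wordProd_le (γ'.reverse.eraseIdx (j - α.length))
        have h2 := List.length_eraseIdx_add_one hjlt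
        rw [List.length_reverse] at *
        omega
      have hlow2 : cs.length ((cs.wordProd γ')⁻¹ * cs.simple i) = γ'.length + 1 := by
        have : ((cs.wordProd γ')⁻¹ * cs.simple i)⁻¹ = cs.wordProd (i :: γ') := by
          rw [cs.wordProd_cons, mul_inv_rev, inv_inv, cs.inv_simple]
        rw [← cs.length_inv, this, hγlen]
      omega

end cox

end HosakaAux

/-- **Lemma (Hosaka).** Let `(W, S)` be a Coxeter system with `S` finite, let `w` be an
element of the center `Z(W)`, and let `w = s_1 ⋯ s_l` be a reduced representation.  Then
`ℓ(w s_i) < ℓ(w)` for every `i = 1, …, l`; consequently, letting `T = {s_1, …, s_l}`, the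
parabolic subgroup `W_T` is finite and `w` is the element of longest length in `W_T`. -/
theorem center_coxeter_reduced_word_right_descents {B : Type*} [Finite B]
    {W : Type*} [Group W] (M : CoxeterMatrix B) (cs : CoxeterSystem M W)
    (w : W) (hw : w ∈ Subgroup.center W)
    (ω : List B) (hred : cs.IsReduced ω) (hprod : w = cs.wordProd ω) :
    (∀ i ∈ ω, cs.length (w * cs.simple i) < cs.length w) ∧
      Finite (Subgroup.closure (cs.simple '' { i | i ∈ ω })) ∧
      w ∈ Subgroup.closure (cs.simple '' { i | i ∈ ω }) ∧
      ∀ v ∈ Subgroup.closure (cs.simple '' { i | i ∈ ω }),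
        v ≠ w → cs.length v < cs.length w := by
  have hcomm := Subgroup.mem_center_iff.mp hw
  -- Part 1: all letters of ω are right descents of w.
  have part1 : ∀ i ∈ ω, cs.length (w * cs.simple i) < cs.length w := by
    intro i hi
    obtain ⟨ω1, ω2, rfl⟩ := List.append_of_mem hi
    have e1 : w = cs.wordProd ω1 * (cs.simple i * cs.wordProd ω2) := by
      rw [hprod, cs.wordProd_append, cs.wordProd_cons]
    have e2 : w * (cs.wordProd ω1)⁻¹ = cs.simple i * cs.wordProd ω2 := by
      rw [← hcomm (cs.wordProd ω1)⁻¹, e1]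
      group
    have e3 : w * cs.simple i = cs.wordProd (ω2 ++ ω1) := by
      rw [← hcomm (cs.simple i), cs.wordProd_append]
      have : w = cs.simple i * cs.wordProd ω2 * cs.wordProd ω1 := by
        rw [← e2]; group
      rw [this, ← mul_assoc, cs.simple_mul_simple_cancel_left]
    have e4 : cs.length (w * cs.simple i) ≤ ω2.length + ω1.length := by
      rw [e3]
      have := cs.length_wordProd_le (ω2 ++ ω1)
      simpa using this
    have e5 : cs.length w = ω1.length + 1 + ω2.length := by
      rw [hprod, hred]
      simp
      omega
    omega
  -- Reduced words in letters of ω for elements of the parabolic, with length bound.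
  have key : ∀ v ∈ Subgroup.closure (cs.simple '' {i | i ∈ ω}),
      ∃ γ : List B, cs.IsReduced γ ∧ (∀ j ∈ γ, j ∈ ω) ∧ v = cs.wordProd γ ∧
        cs.length (w * v) + cs.length v = cs.length w := by
    intro v hv
    obtain ⟨γ, h1, h2, h3⟩ :=
      HosakaAux.exists_reduced_word_of_mem_closure cs {i | i ∈ ω} v hv
    refine ⟨γ, h1, h2, h3, ?_⟩
    have := HosakaAux.length_mul_wordProd_add cs w γ h1 (fun j hj => part1 j (h2 j hj))
    rw [← h3] at this
    have hγv : cs.length v = γ.length := by rw [h3]; exact h1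
    omega
  have hmemw : w ∈ Subgroup.closure (cs.simple '' {i | i ∈ ω}) := by
    rw [hprod]
    unfold CoxeterSystem.wordProd
    apply Subgroup.list_prod_mem
    intro x hx
    obtain ⟨i, hi, rfl⟩ := List.mem_map.mp hx
    exact Subgroup.subset_closure ⟨i, hi, rfl⟩
  have hww : w * w = 1 := by
    obtain ⟨γ, _, _, _, h4⟩ := key w hmemw
    have hlw : cs.length (w * w) = 0 := by omega
    rwa [cs.length_eq_zero_iff] at hlw
  refine ⟨part1, ?_, hmemw, ?_⟩
  · -- finiteness
    have hsub : (Subgroup.closure (cs.simple '' {i | i ∈ ω}) : Set W)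
        ⊆ cs.wordProd '' {γ : List B | γ.length ≤ cs.length w} := by
      intro v hv
      obtain ⟨γ, h1, _, h3, h4⟩ := key v hv
      refine ⟨γ, ?_, h3.symm⟩
      have hγv : cs.length v = γ.length := by rw [h3]; exact h1
      simp only [Set.mem_setOf_eq]
      omega
    have hfin : (Subgroup.closure (cs.simple '' {i | i ∈ ω}) : Set W).Finite :=
      Set.Finite.subset (Set.Finite.image _ (List.finite_length_le B (cs.length w))) hsub
    exact hfin.to_subtype
  · -- w is the unique longest element
    intro v hv hne
    obtain ⟨γ, h1, _, h3, h4⟩ := key v hv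
    have hγv : cs.length v = γ.length := by rw [h3]; exact h1
    rcases Nat.lt_or_ge (cs.length v) (cs.length w) with h | h
    · exact h
    exfalso
    have hlv : cs.length (w * v) = 0 := by omega
    rw [cs.length_eq_zero_iff] at hlv
    apply hne
    have : v = w⁻¹ := by
      rw [← one_mul v, ← inv_mul_cancel w, mul_assoc, hlv, mul_one]
    rw [this, ← one_mul w⁻¹, ← hww, mul_assoc, mul_inv_cancel, mul_one]
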